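/- arXiv:2302.02686 — 2 statements merged into one kernel-verified Lean document; each statement's English description precedes it below -/
import Mathlib

section
/- Let G(E) be a well-formed TFG for (N1,m1) ▷_E (N2,m2). For any marking m1' of N1 there exists at most one total, well-defined configuration c of G(E) such that c ≡ m1' (c agrees with m1' on all places of N1). -/
open Finset

/-- A Petri net over a type of places `P`. -/
structure PetriNet (P : Type) where
  Trans : Type
  pre : Trans → P → ℕ
  post : Trans → P → ℕ

/-- Firing relation between markings. -/
def PetriNet.fire {P : Type} (N : PetriNet P) (m m' : P → ℕ) : Prop :=
  ∃ t : N.Trans, (∀ p, N.pre t p ≤ m p) ∧ ∀ p, m' p = m p - N.pre t p + N.post t p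

/-- Reachability of a marking from an initial one. -/
def PetriNet.reach {P : Type} (N : PetriNet P) (m0 m : P → ℕ) : Prop :=
  Relation.ReflTransGen N.fire m0 m

/-- A marked net is safe (1-bounded) when every reachable marking has at most one token per place. -/
def PetriNet.Safe {P : Type} (N : PetriNet P) (m0 : P → ℕ) : Prop :=
  ∀ m, N.reach m0 m → ∀ p, m p ≤ 1

/-- Two places are concurrent when some reachable marking marks both positively. -/
def PetriNet.ConcPlaces {P : Type} (N : PetriNet P) (m0 : P → ℕ) (p q : P) : Prop :=
  ∃ m, N.reach m0 m ∧ 0 < m p ∧ 0 < m q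

/-- A Token Flow Graph: redundancy arcs `R`, agglomeration arcs `A` (disjoint from `R`,
enforced in well-formedness), and constant nodes given by `kval`. -/
structure TFG (V : Type) [DecidableEq V] where
  R : Finset (V × V)
  A : Finset (V × V)
  kval : V → Option ℕ

variable {V : Type} [DecidableEq V]

def TFG.Edge (G : TFG V) (v w : V) : Prop := (v, w) ∈ G.R ∨ (v, w) ∈ G.A

/-- `G.Reach v w` means `v →* w`. -/
def TFG.Reach (G : TFG V) : V → V → Prop := Relation.ReflTransGen G.Edge

/-- Successor set `succ(v)` (includes `v` itself). -/
def TFG.succs (G : TFG V) (v : V) : Set V := {w | G.Reach v w}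

/-- A root has no incoming arc. -/
def TFG.IsRoot (G : TFG V) (v : V) : Prop := ∀ w, ¬ G.Edge w v

/-- A ∘-leaf has no outgoing agglomeration arc. -/
def TFG.IsCircLeaf (G : TFG V) (v : V) : Prop := ∀ w, (v, w) ∉ G.A

/-- The set `X` such that `v ∘→ X` (agglomeration children of `v`). -/
def TFG.aggChildren (G : TFG V) (v : V) : Finset V :=
  (G.A.filter (fun e => e.1 = v)).image Prod.snd

/-- The set `X` such that `X →• v` (redundancy parents of `v`). -/
def TFG.redParents (G : TFG V) (v : V) : Finset V :=
  (G.R.filter (fun e => e.2 = v)).image Prod.fst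

/-- A configuration is a partial valuation of the nodes; it must agree with constant nodes. -/
def TFG.IsConfig (G : TFG V) (c : V → Option ℕ) : Prop :=
  ∀ v n, G.kval v = some n → c v = some n

/-- A configuration is total when it is defined on every node. -/
def TotalConf (c : V → Option ℕ) : Prop := ∀ v, c v ≠ none

/-- Value of a configuration at a node (0 if undefined). -/
def cval (c : V → Option ℕ) (v : V) : ℕ := (c v).getD 0

/-- Well-definedness of a configuration: conditions (CBot) and (CEq). -/
def TFG.WellDef (G : TFG V) (c : V → Option ℕ) : Prop :=
  (∀ v w, G.Edge v w → (c v = none ↔ c w = none)) ∧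
  (∀ v n, c v = some n →
    ((G.aggChildren v).Nonempty → n = ∑ w ∈ G.aggChildren v, cval c w) ∧
    ((G.redParents v).Nonempty → n = ∑ w ∈ G.redParents v, cval c w))

/-- A system of reduction equations: `(v, X)` stands for the equation `v = ∑_{w ∈ X} w`. -/
abbrev EqSys (V : Type) := Finset (V × Finset V)

/-- A (non-negative integer) solution of the system `E`. -/
def Solves (E : EqSys V) (s : V → ℕ) : Prop :=
  ∀ e ∈ E, s e.1 = ∑ w ∈ e.2, s w

/-- `E, ⟦c⟧` is consistent: some solution of `E` extends the partial valuation `c`. -/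
def ConsistentWith (E : EqSys V) (c : V → Option ℕ) : Prop :=
  ∃ s : V → ℕ, Solves E s ∧ ∀ v n, c v = some n → s v = n

/-- Variables occurring in `E`. -/
def fvars (E : EqSys V) : Set V := {v | ∃ e ∈ E, v = e.1 ∨ v ∈ e.2}

/-- View a marking over the set of places `P` as a partial configuration over `V`. -/
def mconf (P : Set V) [DecidablePred (· ∈ P)] (m : ↥P → ℕ) : V → Option ℕ :=
  fun v => if h : v ∈ P then some (m ⟨v, h⟩) else none

/-- Restriction of a configuration to a set of places, seen as a marking. -/
def restrict (c : V → Option ℕ) (P : Set V) : ↥P → ℕ := fun p => cval c ↑p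

/-- Compatibility `c ≡ m` of a configuration with a marking on `P`. -/
def CompatM (c : V → Option ℕ) (P : Set V) (m : ↥P → ℕ) : Prop :=
  ∀ p : ↥P, c ↑p = some (m p)

/-- A solution of `E` agrees with a marking on `P`. -/
def AgreesOn (s : V → ℕ) (P : Set V) (m : ↥P → ℕ) : Prop := ∀ p : ↥P, s ↑p = m p

/-- `E`-equivalence `(N1,m1) ▷_E (N2,m2)`: conditions (A1), (A2), (A3). -/
structure EEquiv (E : EqSys V) (P1 P2 : Set V)
    (N1 : PetriNet ↥P1) (m1 : ↥P1 → ℕ) (N2 : PetriNet ↥P2) (m2 : ↥P2 → ℕ) : Prop where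
  A1l : ∀ m, N1.reach m1 m → ∃ s, Solves E s ∧ AgreesOn s P1 m
  A1r : ∀ m, N2.reach m2 m → ∃ s, Solves E s ∧ AgreesOn s P2 m
  A2 : ∃ s, Solves E s ∧ AgreesOn s P1 m1 ∧ AgreesOn s P2 m2
  A3 : ∀ m1' m2', (∃ s, Solves E s ∧ AgreesOn s P1 m1' ∧ AgreesOn s P2 m2') →
      (N1.reach m1 m1' ↔ N2.reach m2 m2')

/-- Well-formedness of a TFG for an equivalence statement: conditions (T1)–(T6). -/
structure WellFormed (G : TFG V) (E : EqSys V) (P1 P2 : Set V) : Prop where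
  T1 : {v | G.kval v = none} = P1 ∪ P2 ∪ fvars E
  T2 : ∀ v, G.kval v ≠ none → G.IsRoot v
  T3a : ∀ p p' q, (p, q) ∈ G.A → G.Edge p' q → p' = p
  T3b : ∀ p q, ¬((p, q) ∈ G.R ∧ (p, q) ∈ G.A)
  T4 : ∀ v X, ((X = G.aggChildren v ∨ X = G.redParents v) ∧ X.Nonempty) ↔ (v, X) ∈ E
  T5 : ∀ v, ¬ Relation.TransGen G.Edge v v
  T6root : ∀ v, G.kval v = none → (G.IsRoot v ↔ v ∈ P2)
  T6leaf : ∀ v, G.kval v = none → (G.IsCircLeaf v ↔ v ∈ P1)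

/-- Node concurrency relation of the TFG: both nodes are positive in some
total, well-defined configuration whose restriction to `N2` is reachable. -/
def NodeConc (G : TFG V) (P2 : Set V) [DecidablePred (· ∈ P2)]
    (N2 : PetriNet ↥P2) (m2 : ↥P2 → ℕ) (v w : V) : Prop :=
  ∃ c, G.IsConfig c ∧ TotalConf c ∧ G.WellDef c ∧ N2.reach m2 (restrict c P2) ∧
    0 < cval c v ∧ 0 < cval c w

/-
A total, well-defined configuration is determined by its values on the ∘-leaves: at any other
node, (CEq) fixes the value as the sum over its agglomeration children. The TFG is acyclic with
finitely many arcs, so the child relation is well founded and induction along it applies. A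
∘-leaf is either a constant node, where every configuration takes the constant, or by (T6) a
place of N1, where c ≡ m1' fixes the value.
-/

theorem wellFounded_of_acyclic_of_finite {α : Type*} {r : α → α → Prop} {s : Set α}
    (hs : s.Finite) (hsupp : ∀ a b, r a b → a ∈ s) (hacyc : ∀ a, ¬ Relation.TransGen r a a) :
    WellFounded r := by
  -- `r a b` makes the strict predecessors of `a` a proper subset of those of `b`, missing `a`
  let μ : α → ℕ := fun b => {a ∈ s | Relation.TransGen r a b}.ncard
  refine Subrelation.wf (h₂ := (measure μ).wf) fun {a b} hab => ?_
  refine Set.ncard_lt_ncard ((Set.ssubset_iff_of_subset ?_).2 ?_) (hs.subset (Set.sep_subset _ _))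
  · exact fun x hx => ⟨hx.1, hx.2.tail hab⟩
  · exact ⟨a, ⟨hsupp a b hab, .single hab⟩, fun h => hacyc a h.2⟩

namespace TFG

theorem mem_aggChildren {G : TFG V} {v w : V} : w ∈ G.aggChildren v ↔ (v, w) ∈ G.A := by
  simp [aggChildren]

theorem wellFounded_aggChild {G : TFG V} (hacyc : ∀ v, ¬ Relation.TransGen G.Edge v v) :
    WellFounded fun w v => (v, w) ∈ G.A := by
  refine wellFounded_of_acyclic_of_finite (G.A.image Prod.snd).finite_toSet
    (fun w v h => mem_image.2 ⟨(v, w), h, rfl⟩) fun v h => hacyc v ?_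
  exact Relation.TransGen.mono (fun _ _ => Or.inr) v v (Relation.transGen_swap.1 h)

theorem eq_of_eq_on_circLeaves {G : TFG V}
    (hwf : WellFounded fun w v => (v, w) ∈ G.A) {c₁ c₂ : V → Option ℕ}
    (ht₁ : TotalConf c₁) (ht₂ : TotalConf c₂) (hwd₁ : G.WellDef c₁) (hwd₂ : G.WellDef c₂)
    (hleaf : ∀ v, G.IsCircLeaf v → c₁ v = c₂ v) : c₁ = c₂ := by
  funext v
  induction v using hwf.induction with
  | _ v ih =>
    by_cases hv : G.IsCircLeaf v
    · exact hleaf v hv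
    obtain ⟨w, hw⟩ : ∃ w, (v, w) ∈ G.A := by simpa [IsCircLeaf] using hv
    have hne : (G.aggChildren v).Nonempty := ⟨w, mem_aggChildren.2 hw⟩
    obtain ⟨n₁, h₁⟩ := Option.ne_none_iff_exists'.1 (ht₁ v)
    obtain ⟨n₂, h₂⟩ := Option.ne_none_iff_exists'.1 (ht₂ v)
    have hsum : ∑ x ∈ G.aggChildren v, cval c₁ x = ∑ x ∈ G.aggChildren v, cval c₂ x :=
      sum_congr rfl fun x hx => by rw [cval, cval, ih x (mem_aggChildren.1 hx)]
    rw [h₁, h₂, (hwd₁.2 v n₁ h₁).1 hne, (hwd₂.2 v n₂ h₂).1 hne, hsum]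

end TFG

theorem unicity_of_marking_reduction_general {V : Type} [DecidableEq V] (G : TFG V) (E : EqSys V)
    (P1 P2 : Set V)
    (hwf : WellFormed G E P1 P2)
    (m1' : ↥P1 → ℕ) (c1 c2 : V → Option ℕ)
    (hc1 : G.IsConfig c1) (ht1 : TotalConf c1) (hwd1 : G.WellDef c1) (hm1 : CompatM c1 P1 m1')
    (hc2 : G.IsConfig c2) (ht2 : TotalConf c2) (hwd2 : G.WellDef c2) (hm2 : CompatM c2 P1 m1') :
    c1 = c2 := by
  refine TFG.eq_of_eq_on_circLeaves (TFG.wellFounded_aggChild hwf.T5) ht1 ht2 hwd1 hwd2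
    fun v hleaf => ?_
  cases hk : G.kval v with
  | some k => rw [hc1 v k hk, hc2 v k hk]
  | none =>
    have hv : v ∈ P1 := (hwf.T6leaf v hk).1 hleaf
    rw [hm1 ⟨v, hv⟩, hm2 ⟨v, hv⟩]

theorem unicity_of_marking_reduction {V : Type} [DecidableEq V] (G : TFG V) (E : EqSys V)
    (P1 P2 : Set V) [DecidablePred (· ∈ P1)] [DecidablePred (· ∈ P2)]
    (N1 : PetriNet ↥P1) (m1 : ↥P1 → ℕ) (N2 : PetriNet ↥P2) (m2 : ↥P2 → ℕ)
    (hwf : WellFormed G E P1 P2) (heq : EEquiv E P1 P2 N1 m1 N2 m2)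
    (m1' : ↥P1 → ℕ) (c1 c2 : V → Option ℕ)
    (hc1 : G.IsConfig c1) (ht1 : TotalConf c1) (hwd1 : G.WellDef c1) (hm1 : CompatM c1 P1 m1')
    (hc2 : G.IsConfig c2) (ht2 : TotalConf c2) (hwd2 : G.WellDef c2) (hm2 : CompatM c2 P1 m1') :
    c1 = c2 :=
  unicity_of_marking_reduction_general G E P1 P2 hwf m1' c1 c2 hc1 ht1 hwd1 hm1 hc2 ht2 hwd2 hm2
end

section
/- Let G(E) be a well-formed TFG for (N1,m1) ▷_E (N2,m2). Define the concurrency relation C on nodes: v C w iff there exists a total, well-defined configuration c with the restriction of c to N2 reachable in (N2,m2), c(v) > 0 and c(w) > 0. If v C v and v →* w, then w C w and v C w. -/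
open Finset

variable {V : Type} [DecidableEq V]

/-!
A token on `v` can be pushed along any arc `v → w` without touching anything outside the strict
successors of `v`. Along a redundancy arc nothing has to change: a redundancy node carries the sum
of its parents, so its value is at least that of `v`. Along an agglomeration arc, recompute every
strict successor of `v` from its parents, letting each agglomeration node hand its whole value to a
single chosen child, `w` in the case of `v`; by (T3) an agglomeration child has no other parent,
so every equation still holds. Roots are strict successors of nothing, so the constants and the
marking of `N2` (whose places are roots by (T6)) are untouched. Iterating along `v →* w` gives a
reachable configuration in which `w`, and still `v`, are positive.
-/

open Relation

lemma TotalConf.eq_some_cval {V : Type} {c : V → Option ℕ} (hc : TotalConf c) (v : V) :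
    c v = some (cval c v) := by
  obtain ⟨n, hn⟩ := Option.ne_none_iff_exists'.1 (hc v)
  simp [cval, hn]

lemma WellFormed.isRoot_of_mem_P2 {G : TFG V} {E : EqSys V} {P1 P2 : Set V}
    (hwf : WellFormed G E P1 P2) {p : V} (hp : p ∈ P2) : G.IsRoot p := by
  have hk : p ∈ {v | G.kval v = none} := hwf.T1 ▸ Or.inl (Or.inr hp)
  exact (hwf.T6root p hk).2 hp

namespace TFG

variable (G : TFG V)

lemma mem_redParents {p y : V} : p ∈ G.redParents y ↔ (p, y) ∈ G.R := by
  simp [redParents]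

lemma mem_aggChildren_s10 {q y : V} : y ∈ G.aggChildren q ↔ (q, y) ∈ G.A := by
  simp [aggChildren]

def aggParents (y : V) : Finset V :=
  (G.A.filter (fun e => e.2 = y)).image Prod.fst

lemma mem_aggParents {q y : V} : q ∈ G.aggParents y ↔ (q, y) ∈ G.A := by
  simp [aggParents]

lemma not_transGen_of_isRoot {x y : V} (hy : G.IsRoot y) : ¬ TransGen G.Edge x y := fun h =>
  let ⟨_, _, hzy⟩ := TransGen.tail'_iff.1 h
  hy _ hzy

lemma wellFounded_edge (hacyc : ∀ v, ¬ TransGen G.Edge v v) : WellFounded G.Edge := by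
  classical
  let ancestors (y : V) : Finset V :=
    ((G.R ∪ G.A).image Prod.fst).filter (TransGen G.Edge · y)
  refine Subrelation.wf (fun {a b} hab => ?_) (measure fun y => #(ancestors y)).wf
  have ha : a ∈ ancestors b :=
    mem_filter.2 ⟨mem_image.2 ⟨(a, b), by rcases hab with h | h <;> simp [h], rfl⟩,
      .single hab⟩
  refine card_lt_card ((ssubset_iff_of_subset fun x hx => ?_).2 ⟨a, ha, fun h => ?_⟩)
  · exact mem_filter.2 ⟨(mem_filter.1 hx).1, (mem_filter.1 hx).2.tail hab⟩
  · exact hacyc a (mem_filter.1 h).2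

def Balanced (f : V → ℕ) : Prop :=
  (∀ v, (G.aggChildren v).Nonempty → f v = ∑ w ∈ G.aggChildren v, f w) ∧
    ∀ v, (G.redParents v).Nonempty → f v = ∑ w ∈ G.redParents v, f w

variable {G}

lemma redParents_eq_empty_of_mem_A (hT3a : ∀ p p' q, (p, q) ∈ G.A → G.Edge p' q → p' = p)
    (hT3b : ∀ p q, ¬((p, q) ∈ G.R ∧ (p, q) ∈ G.A)) {q y : V} (hqy : (q, y) ∈ G.A) :
    G.redParents y = ∅ := by
  refine eq_empty_of_forall_notMem fun p hp => ?_
  have hpy := G.mem_redParents.1 hp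
  obtain rfl := hT3a q p y hqy (Or.inl hpy)
  exact hT3b p y ⟨hpy, hqy⟩

lemma aggParents_eq_singleton_of_mem_A
    (hT3a : ∀ p p' q, (p, q) ∈ G.A → G.Edge p' q → p' = p)
    {q y : V} (hqy : (q, y) ∈ G.A) : G.aggParents y = {q} := by
  ext p
  rw [mem_aggParents, mem_singleton]
  exact ⟨fun hpy => hT3a q p y hqy (Or.inr hpy), fun h => h ▸ hqy⟩

lemma transGen_iff_of_mem_A (hT3a : ∀ p p' q, (p, q) ∈ G.A → G.Edge p' q → p' = p)
    {q y : V} (hqy : (q, y) ∈ G.A) {v : V} :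
    TransGen G.Edge v y ↔ ReflTransGen G.Edge v q := by
  refine ⟨fun h => ?_, fun h => .tail' h (Or.inr hqy)⟩
  obtain ⟨p, hvp, hpy⟩ := TransGen.tail'_iff.1 h
  rwa [hT3a q p y hqy hpy] at hvp

lemma Balanced.le_of_mem_R {f : V → ℕ} (hf : G.Balanced f) {p y : V} (hpy : (p, y) ∈ G.R) :
    f p ≤ f y := by
  have hp : p ∈ G.redParents y := G.mem_redParents.2 hpy
  rw [hf.2 y ⟨p, hp⟩]
  exact single_le_sum (fun _ _ => Nat.zero_le _) hp

lemma wellDef_some_of_balanced {f : V → ℕ} (hf : G.Balanced f) :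
    G.WellDef fun y => some (f y) :=
  ⟨fun _ _ _ => by simp, fun v _ hn => by
    obtain rfl := Option.some.inj hn
    exact ⟨hf.1 v, hf.2 v⟩⟩

lemma WellDef.balanced_cval {c : V → Option ℕ} (hwd : G.WellDef c) (hc : TotalConf c) :
    G.Balanced (cval c) :=
  ⟨fun v => (hwd.2 v _ (hc.eq_some_cval v)).1, fun v => (hwd.2 v _ (hc.eq_some_cval v)).2⟩

variable (G)

open Classical in
noncomputable def propagate (hedge : WellFounded G.Edge) (sel : V → V) (v : V) (s : V → ℕ) :
    V → ℕ :=
  hedge.fix fun y rec =>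
    if TransGen G.Edge v y then
      (∑ p ∈ (G.redParents y).attach, rec p (Or.inl (G.mem_redParents.1 p.2))) +
        ∑ q ∈ (G.aggParents y).attach,
          if y = sel q then rec q (Or.inr (G.mem_aggParents.1 q.2)) else 0
    else s y

variable {G} {hedge : WellFounded G.Edge} {sel : V → V} {v : V} {s : V → ℕ}

lemma propagate_of_not_transGen {y : V} (hy : ¬ TransGen G.Edge v y) :
    G.propagate hedge sel v s y = s y := by
  rw [propagate, WellFounded.fix_eq, if_neg hy]

lemma propagate_of_transGen {y : V} (hy : TransGen G.Edge v y) :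
    G.propagate hedge sel v s y =
      (∑ p ∈ G.redParents y, G.propagate hedge sel v s p) +
        ∑ q ∈ G.aggParents y, if y = sel q then G.propagate hedge sel v s q else 0 := by
  rw [propagate, WellFounded.fix_eq, if_pos hy, ← sum_attach (G.redParents y),
    ← sum_attach (G.aggParents y)]

lemma propagate_of_mem_A (hT3a : ∀ p p' q, (p, q) ∈ G.A → G.Edge p' q → p' = p)
    (hT3b : ∀ p q, ¬((p, q) ∈ G.R ∧ (p, q) ∈ G.A)) {q y : V} (hqy : (q, y) ∈ G.A)
    (hy : TransGen G.Edge v y) :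
    G.propagate hedge sel v s y = if y = sel q then G.propagate hedge sel v s q else 0 := by
  rw [propagate_of_transGen hy, redParents_eq_empty_of_mem_A hT3a hT3b hqy,
    aggParents_eq_singleton_of_mem_A hT3a hqy, sum_empty, sum_singleton, zero_add]

lemma propagate_of_redParents_nonempty
    (hT3a : ∀ p p' q, (p, q) ∈ G.A → G.Edge p' q → p' = p)
    (hT3b : ∀ p q, ¬((p, q) ∈ G.R ∧ (p, q) ∈ G.A)) {y : V}
    (hne : (G.redParents y).Nonempty)
    (hy : TransGen G.Edge v y) :
    G.propagate hedge sel v s y = ∑ p ∈ G.redParents y, G.propagate hedge sel v s p := by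
  have hagg : G.aggParents y = ∅ := eq_empty_of_forall_notMem fun q hq =>
    hne.ne_empty (redParents_eq_empty_of_mem_A hT3a hT3b (G.mem_aggParents.1 hq))
  rw [propagate_of_transGen hy, hagg, sum_empty, add_zero]

lemma balanced_propagate (hT3a : ∀ p p' q, (p, q) ∈ G.A → G.Edge p' q → p' = p)
    (hT3b : ∀ p q, ¬((p, q) ∈ G.R ∧ (p, q) ∈ G.A))
    (hsel : ∀ q, (G.aggChildren q).Nonempty → sel q ∈ G.aggChildren q) (hs : G.Balanced s) :
    G.Balanced (G.propagate hedge sel v s) := by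
  refine ⟨fun q hne => ?_, fun y hne => ?_⟩
  · by_cases hq : ReflTransGen G.Edge v q
    · have hz : ∀ z ∈ G.aggChildren q, G.propagate hedge sel v s z =
          if z = sel q then G.propagate hedge sel v s q else 0 := fun z hz =>
        have hqz := G.mem_aggChildren_s10.1 hz
        propagate_of_mem_A hT3a hT3b hqz ((transGen_iff_of_mem_A hT3a hqz).2 hq)
      rw [sum_congr rfl hz, sum_ite_eq', if_pos (hsel q hne)]
    · have hz : ∀ z ∈ G.aggChildren q, G.propagate hedge sel v s z = s z := fun z hz =>
        propagate_of_not_transGen (mt (transGen_iff_of_mem_A hT3a (G.mem_aggChildren_s10.1 hz)).1 hq)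
      rw [sum_congr rfl hz, propagate_of_not_transGen (mt TransGen.to_reflTransGen hq)]
      exact hs.1 q hne
  · by_cases hy : TransGen G.Edge v y
    · exact propagate_of_redParents_nonempty hT3a hT3b hne hy
    · have hp : ∀ p ∈ G.redParents y, G.propagate hedge sel v s p = s p := fun p hp =>
        propagate_of_not_transGen fun hvp => hy (hvp.tail (Or.inl (G.mem_redParents.1 hp)))
      rw [sum_congr rfl hp, propagate_of_not_transGen hy]
      exact hs.2 y hne

lemma exists_aggSelection {v w : V} (hvw : (v, w) ∈ G.A) :
    ∃ sel : V → V, (∀ q, (G.aggChildren q).Nonempty → sel q ∈ G.aggChildren q) ∧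
      sel v = w := by
  classical
  refine ⟨fun q => if q = v then w else if h : (G.aggChildren q).Nonempty then h.choose else q,
    fun q hq => ?_, if_pos rfl⟩
  dsimp only
  split_ifs with hqv
  · exact hqv ▸ G.mem_aggChildren_s10.2 hvw
  · exact hq.choose_spec

variable {E : EqSys V} {P1 P2 : Set V} {c : V → Option ℕ} {v w : V}

lemma exists_conf_pos_of_mem_A (hwf : WellFormed G E P1 P2) (hc : G.IsConfig c)
    (ht : TotalConf c) (hwd : G.WellDef c) (hvw : (v, w) ∈ G.A) (hv : 0 < cval c v) :
    ∃ c', G.IsConfig c' ∧ TotalConf c' ∧ G.WellDef c' ∧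
      (∀ y, ¬ TransGen G.Edge v y → c' y = c y) ∧ 0 < cval c' w := by
  obtain ⟨sel, hsel, rfl⟩ := G.exists_aggSelection hvw
  set f := G.propagate (G.wellFounded_edge hwf.T5) sel v (cval c) with hf
  have hunch : ∀ y, ¬ TransGen G.Edge v y → some (f y) = c y := fun y hy => by
    rw [hf, propagate_of_not_transGen hy, ht.eq_some_cval]
  refine ⟨fun y => some (f y), fun y n hn => ?_, fun y => Option.some_ne_none _,
    wellDef_some_of_balanced (balanced_propagate hwf.T3a hwf.T3b hsel (hwd.balanced_cval ht)),
    hunch, ?_⟩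
  · exact (hunch y (G.not_transGen_of_isRoot (hwf.T2 y (by simp [hn])))).trans (hc y n hn)
  · change 0 < f (sel v)
    rwa [hf, propagate_of_mem_A hwf.T3a hwf.T3b hvw (.single (Or.inr hvw)), if_pos rfl,
      propagate_of_not_transGen (hwf.T5 v)]

lemma exists_conf_pos_of_edge (hwf : WellFormed G E P1 P2) (hc : G.IsConfig c)
    (ht : TotalConf c) (hwd : G.WellDef c) (hvw : G.Edge v w) (hv : 0 < cval c v) :
    ∃ c', G.IsConfig c' ∧ TotalConf c' ∧ G.WellDef c' ∧
      (∀ y, ¬ TransGen G.Edge v y → c' y = c y) ∧ 0 < cval c' w := by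
  rcases hvw with hR | hA
  · exact ⟨c, hc, ht, hwd, fun _ _ => rfl, hv.trans_le ((hwd.balanced_cval ht).le_of_mem_R hR)⟩
  · exact exists_conf_pos_of_mem_A hwf hc ht hwd hA hv

lemma exists_conf_pos_of_reach (hwf : WellFormed G E P1 P2) (hc : G.IsConfig c)
    (ht : TotalConf c) (hwd : G.WellDef c) (hv : 0 < cval c v) (hvw : G.Reach v w) :
    ∃ c', G.IsConfig c' ∧ TotalConf c' ∧ G.WellDef c' ∧
      (∀ y, ¬ TransGen G.Edge v y → c' y = c y) ∧ 0 < cval c' w := by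
  induction hvw using ReflTransGen.head_induction_on generalizing c with
  | refl => exact ⟨c, hc, ht, hwd, fun _ _ => rfl, hv⟩
  | head hab _ ih =>
    obtain ⟨c₁, hc₁, ht₁, hwd₁, hunch₁, hb⟩ :=
      exists_conf_pos_of_edge hwf hc ht hwd hab hv
    obtain ⟨c₂, hc₂, ht₂, hwd₂, hunch₂, hw⟩ := ih hc₁ ht₁ hwd₁ hb
    exact ⟨c₂, hc₂, ht₂, hwd₂,
      fun y hy => (hunch₂ y fun hby => hy (.head hab hby)).trans (hunch₁ y hy), hw⟩

end TFG

theorem nondead_propagation_general {V : Type} [DecidableEq V] (G : TFG V) (E : EqSys V)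
    (P1 P2 : Set V) [DecidablePred (· ∈ P2)]
    (N2 : PetriNet ↥P2) (m2 : ↥P2 → ℕ)
    (hwf : WellFormed G E P1 P2)
    (v w : V) (hv : NodeConc G P2 N2 m2 v v) (hvw : G.Reach v w) :
    NodeConc G P2 N2 m2 w w ∧ NodeConc G P2 N2 m2 v w := by
  obtain ⟨c, hc, ht, hwd, hreach, hcv, -⟩ := hv
  obtain ⟨c', hc', ht', hwd', hunch, hw⟩ := TFG.exists_conf_pos_of_reach hwf hc ht hwd hcv hvw
  have hP2 : restrict c' P2 = restrict c P2 := funext fun p =>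
    congrArg (Option.getD · 0) (hunch p (G.not_transGen_of_isRoot (hwf.isRoot_of_mem_P2 p.2)))
  have hv' : 0 < cval c' v := by
    rwa [cval, hunch v (hwf.T5 v)]
  rw [← hP2] at hreach
  exact ⟨⟨c', hc', ht', hwd', hreach, hw, hw⟩, ⟨c', hc', ht', hwd', hreach, hv', hw⟩⟩

theorem nondead_propagation {V : Type} [DecidableEq V] (G : TFG V) (E : EqSys V)
    (P1 P2 : Set V) [DecidablePred (· ∈ P1)] [DecidablePred (· ∈ P2)]
    (N1 : PetriNet ↥P1) (m1 : ↥P1 → ℕ) (N2 : PetriNet ↥P2) (m2 : ↥P2 → ℕ)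
    (hwf : WellFormed G E P1 P2) (heq : EEquiv E P1 P2 N1 m1 N2 m2)
    (v w : V) (hv : NodeConc G P2 N2 m2 v v) (hvw : G.Reach v w) :
    NodeConc G P2 N2 m2 w w ∧ NodeConc G P2 N2 m2 v w :=
  nondead_propagation_general G E P1 P2 N2 m2 hwf v w hv hvw
end
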